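/- Let κ be an infinite cardinal and G an abelian group. Then G \ {0} can be covered by κ many linearly independent subsets if and only if |G| ≤ κ⁺ and either |G[ℕ]| ≤ κ or G = G[p] for some prime p. -/

import Mathlib

/-- Linear independence of a subset of an abelian group in the sense of Fuchs. -/
def LinIndepSet {G : Type*} [AddCommGroup G] (A : Set G) : Prop :=
  ∀ (s : Finset G), ↑s ⊆ A → ∀ l : G → ℤ,
    ∑ a ∈ s, l a • a = 0 → ∀ a ∈ s, l a • a = 0

/-!
Necessity. An independent set contains at most two elements `x` with `x + d` also in it
(`d ≠ 0`). Hence, given a cover by `κ` independent sets, a set of size `κ⁺` lies in a subgroup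
`W` of size `κ⁺` that contains every such `x` for every nonzero `d ∈ W`; if `W ≠ G`, two elements
of a coset `z + W` share an independent set, and their difference `d` puts `z` into `W`. If
`G[ℕ]` has more than `κ` elements, so has some `G[p]` with `p` prime, and a coset `g + G[p]`
with `p • g ≠ 0` meets each independent set at most once, so `p • G = 0`.

Sufficiency. Well-order `G` in type `κ⁺` and let `H α` be the subgroup generated by the initial
segment up to `α` (when `p • G = 0`), resp. its isolator `{x | ∃ n > 0, n • x ∈ ⟨…⟩}` (when
`|G[ℕ]| ≤ κ`). These have size `≤ κ`, and `n • a ∈ H α`, `n • a ≠ 0` force `a ∈ H α`. Colour `a`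
by an injection of `H (ν a)` into `κ`, where `ν a` is the least `α` with `a ∈ H α`: in a
relation among equally coloured elements, the one with the largest `ν` would lie in an
earlier `H α`.
-/

universe u

open Cardinal Set

section

variable {G : Type u} [AddCommGroup G]

namespace LinIndepSet

theorem smul_eq_zero_of_sum_fin {A : Set G} (hA : LinIndepSet A) {n : ℕ} {v : Fin n → G}
    (hv : Function.Injective v) (hvA : ∀ i, v i ∈ A) (l : Fin n → ℤ)
    (hsum : ∑ i, l i • v i = 0) (i : Fin n) : l i • v i = 0 := by
  classical
  have key := hA (Finset.univ.map ⟨v, hv⟩) (by simpa [Set.range_subset_iff] using hvA)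
    (Function.extend v l 0) (by simpa [hv.extend_apply] using hsum) (v i) (by simp)
  rwa [hv.extend_apply] at key

theorem nsmul_eq_zero_of_nsmul_eq {A : Set G} (hA : LinIndepSet A) {x y : G} (hx : x ∈ A)
    (hy : y ∈ A) (hxy : x ≠ y) {n : ℕ} (h : n • x = n • y) : n • x = 0 := by
  have hinj : Function.Injective ![x, y] := by
    simp [Function.Injective, Fin.forall_fin_two, hxy, hxy.symm]
  simpa using hA.smul_eq_zero_of_sum_fin hinj (by simp [Fin.forall_fin_two, hx, hy])
    ![n, -n] (by simp [h]) 0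

theorem eq_add_or_eq_add {A : Set G} (hA : LinIndepSet A) {d x y : G} (hd : d ≠ 0) (hxy : x ≠ y)
    (hx : x ∈ A) (hxd : x + d ∈ A) (hy : y ∈ A) (hyd : y + d ∈ A) : y = x + d ∨ x = y + d := by
  by_contra! h
  have hinj : Function.Injective ![x, x + d, y, y + d] := by
    simp [Function.Injective, Fin.forall_fin_succ, hd, hxy, hxy.symm, h.1, h.2, h.1.symm, h.2.symm]
  have := hA.smul_eq_zero_of_sum_fin hinj (by simp [Fin.forall_fin_succ, hx, hxd, hy, hyd])
    ![1, -1, -1, 1] (by simp [Fin.sum_univ_four])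
  simp [Fin.forall_fin_succ] at this
  exact hxy (this.1.trans this.2.2.1.symm)

theorem add_add_notMem {A : Set G} (hA : LinIndepSet A) {d x : G} (hd : d + d ≠ 0)
    (hx : x ∈ A) (hxd : x + d ∈ A) : x + d + d ∉ A := by
  intro hxdd
  have hd₀ : d ≠ 0 := by rintro rfl; simp at hd
  have hinj : Function.Injective ![x, x + d, x + d + d] := by
    simp [Function.Injective, Fin.forall_fin_succ, hd₀, hd, add_assoc]
  have := hA.smul_eq_zero_of_sum_fin hinj (by simp [Fin.forall_fin_succ, hx, hxd, hxdd])
    ![1, -2, 1] (by simp [Fin.sum_univ_three]; abel)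
  simp [Fin.forall_fin_succ] at this
  exact hd (by simpa [this.1, add_assoc] using this.2.2)

theorem eq_or_eq_add_of_add_add_mem {A : Set G} (hA : LinIndepSet A) {d x z : G} (hd : d ≠ 0)
    (hx : x ∈ A) (hxd : x + d ∈ A) (hxdd : x + d + d ∈ A) (hz : z ∈ A) (hzd : z + d ∈ A) :
    z = x ∨ z = x + d := by
  by_contra! hzx
  have hxz : x = z + d := (hA.eq_add_or_eq_add hd hzx.1.symm hx hxd hz hzd).resolve_left hzx.2
  have hzxdd : z = x + d + d :=
    (hA.eq_add_or_eq_add hd (Ne.symm hzx.2) hxd hxdd hz hzd).resolve_right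
      fun h => hzx.1 (add_right_cancel h).symm
  have h3 : d + d + d = 0 := by
    rw [hzxdd] at hxz
    simpa [add_assoc] using hxz.symm
  have h2 : d + d ≠ 0 := fun h2 => hd (by rwa [h2, zero_add] at h3)
  exact hA.add_add_notMem h2 hx hxd hxdd

theorem mk_setOf_mem_and_add_mem_le_two {A : Set G} (hA : LinIndepSet A) {d : G} (hd : d ≠ 0) :
    #{x | x ∈ A ∧ x + d ∈ A} ≤ 2 := by
  by_contra! h
  obtain ⟨⟨x, hx, hxd⟩, ⟨y, hy, hyd⟩, hxy⟩ := two_le_iff.mp h.le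
  obtain ⟨⟨z, hz, hzd⟩, hzx, hzy⟩ :=
    exists_ne_ne_of_three_le (two_add_one_eq_three (R := Cardinal) ▸ add_one_le_of_lt h)
      (⟨x, hx, hxd⟩ : ↥{x | x ∈ A ∧ x + d ∈ A}) ⟨y, hy, hyd⟩
  simp only [ne_eq, Subtype.mk.injEq] at hxy hzx hzy
  rcases hA.eq_add_or_eq_add hd hxy hx hxd hy hyd with rfl | rfl
  · exact (hA.eq_or_eq_add_of_add_add_mem hd hx hxd hyd hz hzd).elim hzx hzy
  · exact (hA.eq_or_eq_add_of_add_add_mem hd hy hyd hxd hz hzd).elim hzy hzx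

end LinIndepSet

theorem mk_iUnion_nat_le {α : Type u} {κ : Cardinal.{u}} (hκ : ℵ₀ ≤ κ) {f : ℕ → Set α}
    (hf : ∀ n, #(f n) ≤ κ) : #(⋃ n, f n) ≤ κ := by
  have := mk_iUnion_le_lift f
  simp only [mk_nat, lift_aleph0, lift_uzero] at this
  calc #(⋃ n, f n) ≤ ℵ₀ * ⨆ n, #(f n) := this
    _ ≤ κ * κ := mul_le_mul' hκ (ciSup_le' hf)
    _ = κ := mul_eq_self hκ

theorem mk_addSubgroupClosure_le (S : Set G) : #(AddSubgroup.closure S) ≤ max #S ℵ₀ := by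
  rcases isEmpty_or_nonempty S with hS | hS
  · simp [Set.isEmpty_coe_sort.mp hS]
  · rw [FreeAddGroup.closure_eq_range, ← mk_freeAddGroup]
    exact mk_range_le

theorem mk_preimage_le_mul_mk_ker {H : Type u} [AddGroup H] (f : G →+ H) (S : Set H) :
    #(f ⁻¹' S) ≤ #S * #f.ker := by
  refine mk_le_mk_mul_of_mk_preimage_le (S.restrictPreimage f) fun y => ?_
  rcases isEmpty_or_nonempty (S.restrictPreimage f ⁻¹' {y}) with h | ⟨⟨x₀⟩⟩
  · simp
  refine mk_le_of_injective (f := fun x => ⟨x.1.1 - x₀.1.1, ?_⟩) fun x x' h => ?_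
  · have hx := congrArg Subtype.val x.2
    have hx₀ := congrArg Subtype.val x₀.2
    simp_all [AddMonoidHom.mem_ker]
  · simpa [Subtype.ext_iff] using h

theorem mk_setOf_mul_nsmul_eq_zero_le (m n : ℕ) :
    #{x : G | (m * n) • x = 0} ≤ #{x : G | m • x = 0} * #{x : G | n • x = 0} := by
  have h : {x : G | (m * n) • x = 0} = nsmulAddMonoidHom n ⁻¹' {y | m • y = 0} := by
    ext; simp [mul_smul]
  rw [h]
  exact mk_preimage_le_mul_mk_ker _ _

theorem exists_prime_lt_mk_setOf_nsmul_eq_zero {κ : Cardinal.{u}} (hκ : ℵ₀ ≤ κ)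
    (hT : κ < #{x : G | ∃ n : ℕ, 0 < n ∧ n • x = 0}) :
    ∃ p : ℕ, p.Prime ∧ κ < #{x : G | p • x = 0} := by
  by_contra! hp
  have hn : ∀ n : ℕ, 0 < n → #{x : G | n • x = 0} ≤ κ := by
    intro n
    induction n using Nat.recOnMul with
    | zero => exact fun h => absurd h (lt_irrefl 0)
    | one => exact fun _ => by simpa using one_le_aleph0.trans hκ
    | prime p hp' => exact fun _ => hp p hp'
    | mul a b ha hb =>
      intro hab
      calc #{x : G | (a * b) • x = 0} ≤ #{x : G | a • x = 0} * #{x : G | b • x = 0} :=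
            mk_setOf_mul_nsmul_eq_zero_le a b
        _ ≤ κ * κ :=
            mul_le_mul' (ha (Nat.pos_of_mul_pos_right hab)) (hb (Nat.pos_of_mul_pos_left hab))
        _ = κ := mul_eq_self hκ
  refine hT.not_ge <|
    (mk_le_mk_of_subset ?_).trans (mk_iUnion_nat_le hκ fun n => hn (n + 1) n.succ_pos)
  rintro x ⟨n, hn, hx⟩
  exact mem_iUnion.2 ⟨n - 1, by rwa [Nat.sub_add_cancel hn]⟩

theorem exists_closed_addSubgroup_mk_le {μ : Cardinal.{u}} (hμ : ℵ₀ ≤ μ) (F : G → Set G)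
    (hF : ∀ x, #(F x) ≤ μ) {S : Set G} (hS : #S ≤ μ) :
    ∃ W : AddSubgroup G, S ⊆ W ∧ (∀ x ∈ W, F x ⊆ W) ∧ #W ≤ μ := by
  let step (T : AddSubgroup G) : AddSubgroup G :=
    AddSubgroup.closure ((T : Set G) ∪ ⋃ x ∈ (T : Set G), F x)
  let T (n : ℕ) : AddSubgroup G := step^[n] (AddSubgroup.closure S)
  have hsucc (n : ℕ) : T (n + 1) = step (T n) := Function.iterate_succ_apply' step n _
  have hmono : Monotone T := monotone_nat_of_le_succ fun n x hx => by
    rw [hsucc]; exact AddSubgroup.subset_closure (Or.inl hx)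
  have hclosure {U : Set G} (hU : #U ≤ μ) : #(AddSubgroup.closure U) ≤ μ :=
    (mk_addSubgroupClosure_le U).trans (max_le hU hμ)
  have hT : ∀ n, #(T n) ≤ μ := by
    intro n
    induction n with
    | zero => exact hclosure hS
    | succ n ih =>
      rw [hsucc]
      refine hclosure ((mk_union_le _ _).trans ?_)
      calc #(T n) + #(⋃ x ∈ (T n : Set G), F x) ≤ μ + μ * μ :=
            add_le_add ih ((mk_biUnion_le _ _).trans (mul_le_mul' ih (ciSup_le' fun x => hF x)))
        _ = μ := by rw [mul_eq_self hμ, add_eq_self hμ]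
  have hcoe : ((⨆ n, T n : AddSubgroup G) : Set G) = ⋃ n, (T n : Set G) :=
    AddSubgroup.coe_iSup_of_directed hmono.directed_le
  refine ⟨⨆ n, T n, AddSubgroup.subset_closure.trans (le_iSup T 0), fun x hx y hy => ?_, ?_⟩
  · rw [← SetLike.mem_coe, hcoe, mem_iUnion] at hx
    obtain ⟨n, hn⟩ := hx
    refine le_iSup T (n + 1) ?_
    rw [hsucc]
    exact AddSubgroup.subset_closure (Or.inr (mem_biUnion hn hy))
  · change #((⨆ n, T n : AddSubgroup G) : Set G) ≤ μ
    rw [hcoe]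
    exact mk_iUnion_nat_le hμ hT

def IndepCovered (ι : Type*) (D : Set G) : Prop :=
  ∃ c : ι → Set G, (∀ i, LinIndepSet (c i)) ∧ D ⊆ ⋃ i, c i

theorem IndepCovered.mono {ι : Type*} {D D' : Set G} (h : IndepCovered ι D') (hD : D ⊆ D') :
    IndepCovered ι D :=
  let ⟨c, hind, hcov⟩ := h
  ⟨c, hind, hD.trans hcov⟩

theorem mem_of_lt_mk_of_cover {ι : Type u} {c : ι → Set G} (hcov : {x : G | x ≠ 0} ⊆ ⋃ i, c i)
    {W : AddSubgroup G} (hW : #ι < #W)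
    (hclosed : ∀ d ∈ W, d ≠ 0 → ∀ i, ∀ x ∈ c i, x + d ∈ c i → x ∈ W) (z : G) : z ∈ W := by
  by_contra hz
  have hcol : ∀ w : W, ∃ i, z + w ∈ c i := fun w =>
    mem_iUnion.1 (hcov fun h0 => hz (by simp [eq_neg_of_add_eq_zero_left h0]))
  choose χ hχ using hcol
  obtain ⟨w₁, w₂, hχw, hne⟩ : ∃ w₁ w₂, χ w₁ = χ w₂ ∧ w₁ ≠ w₂ := by
    by_contra! hinj
    exact (mk_le_of_injective (f := χ) fun a b h => hinj a b h).not_gt hW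
  have hzw : z + w₂ ∈ W := by
    refine hclosed _ (W.sub_mem w₁.2 w₂.2) (sub_ne_zero.2 (Subtype.coe_injective.ne hne))
      (χ w₁) _ (hχw ▸ hχ w₂) ?_
    rw [show z + w₂ + (w₁ - w₂) = z + w₁ by abel]
    exact hχ w₁
  exact hz (by simpa using W.sub_mem hzw w₂.2)

theorem IndepCovered.mk_le_succ {ι : Type u} (hι : ℵ₀ ≤ #ι) (h : IndepCovered ι {x : G | x ≠ 0}) :
    #G ≤ Order.succ #ι := by
  classical
  obtain ⟨c, hind, hcov⟩ := h
  by_contra! hG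
  obtain ⟨S, hS⟩ := le_mk_iff_exists_set.mp hG.le
  let F : G → Set G := fun d => if d = 0 then ∅ else ⋃ i, {x | x ∈ c i ∧ x + d ∈ c i}
  have hF : ∀ d, #(F d) ≤ Order.succ #ι := by
    intro d
    by_cases hd : d = 0
    · simp [F, hd]
    simp only [F, if_neg hd]
    calc #(⋃ i, {x | x ∈ c i ∧ x + d ∈ c i}) ≤ #ι * ⨆ i, #{x | x ∈ c i ∧ x + d ∈ c i} :=
          mk_iUnion_le _
      _ ≤ #ι * #ι := mul_le_mul' le_rfl <| ciSup_le' fun i =>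
          ((hind i).mk_setOf_mem_and_add_mem_le_two hd).trans
            ((natCast_lt_aleph0 (n := 2)).le.trans hι)
      _ = #ι := mul_eq_self hι
      _ ≤ Order.succ #ι := Order.le_succ _
  obtain ⟨W, hSW, hWF, hW⟩ :=
    exists_closed_addSubgroup_mk_le (hι.trans (Order.le_succ _)) F hF hS.le
  have hGW : ∀ z, z ∈ W := by
    refine mem_of_lt_mk_of_cover hcov ((hS ▸ Order.lt_succ #ι).trans_le (mk_le_mk_of_subset hSW))
      fun d hd hd0 i x hx hxd => hWF d hd ?_
    simp only [F, if_neg hd0]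
    exact mem_iUnion.2 ⟨i, hx, hxd⟩
  exact hG.not_ge (hW.trans' (mk_le_of_injective (f := fun g => (⟨g, hGW g⟩ : W))
    fun _ _ h => congrArg Subtype.val h))

theorem IndepCovered.nsmul_eq_zero_of_lt_mk {ι : Type u} (h : IndepCovered ι {x : G | x ≠ 0})
    {p : ℕ} (hp : #ι < #{x : G | p • x = 0}) (x : G) : p • x = 0 := by
  obtain ⟨c, hind, hcov⟩ := h
  by_contra hx
  have hpt : ∀ t : {t : G | p • t = 0}, p • (x + t) = p • x := fun t => by
    simp [smul_add, t.2.out]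
  have hcol : ∀ t : {t : G | p • t = 0}, ∃ i, x + t ∈ c i := fun t =>
    mem_iUnion.1 (hcov fun h0 => hx (by rw [← hpt t, h0, smul_zero]))
  choose χ hχ using hcol
  refine hp.not_ge (mk_le_of_injective (f := χ) fun t t' htt' => ?_)
  by_contra hne
  have := (hind (χ t)).nsmul_eq_zero_of_nsmul_eq (hχ t) (htt' ▸ hχ t')
    (by simpa [Subtype.ext_iff] using hne) (by rw [hpt, hpt])
  exact hx (by rwa [hpt] at this)

theorem LinIndepSet.of_filtration {β : Type*} [LinearOrder β] {H : β → AddSubgroup G}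
    (hmono : Monotone H) (hpure : ∀ b (a : G) (n : ℤ), n • a ∈ H b → n • a ≠ 0 → a ∈ H b)
    {A : Set G} {ν : G → β} (hν : InjOn ν A) (hmem : ∀ a ∈ A, a ∈ H (ν a))
    (hmin : ∀ a ∈ A, ∀ b < ν a, a ∉ H b) : LinIndepSet A := by
  classical
  intro s
  induction s using Finset.induction_on_max_value ν with
  | empty => simp
  | insert a s ha hmax ih =>
    intro hs l hsum
    rw [Finset.coe_insert, insert_subset_iff] at hs
    rw [Finset.sum_insert ha] at hsum
    have hlt : ∀ x ∈ s, ν x < ν a := fun x hx =>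
      (hmax x hx).lt_of_ne fun h => ha (hν (hs.2 hx) hs.1 h ▸ hx)
    have ha0 : l a • a = 0 := by
      rcases s.eq_empty_or_nonempty with rfl | hne
      · simpa using hsum
      by_contra hne0
      refine hmin a hs.1 _ ((Finset.sup'_lt_iff hne).2 hlt) (hpure _ a (l a) ?_ hne0)
      rw [eq_neg_of_add_eq_zero_left hsum]
      exact neg_mem (sum_mem fun x hx =>
        zsmul_mem (hmono (Finset.le_sup' ν hx) (hmem x (hs.2 hx))) _)
    rw [ha0, zero_add] at hsum
    intro x hx
    rcases Finset.mem_insert.1 hx with rfl | hx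
    · exact ha0
    · exact ih hs.2 l hsum x hx

theorem indepCovered_univ_of_filtration {ι β : Type*} [LinearOrder β] [WellFoundedLT β]
    {H : β → AddSubgroup G} (hmono : Monotone H)
    (hpure : ∀ b (a : G) (n : ℤ), n • a ∈ H b → n • a ≠ 0 → a ∈ H b)
    (hcover : ∀ a, ∃ b, a ∈ H b) (emb : ∀ b, H b ↪ ι) : IndepCovered ι (univ : Set G) := by
  let ν (a : G) : β := wellFounded_lt.min {b | a ∈ H b} (hcover a)
  have hν (a : G) : a ∈ H (ν a) := wellFounded_lt.min_mem _ (hcover a)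
  let χ (a : G) : ι := emb (ν a) ⟨a, hν a⟩
  have hemb : ∀ b b' (x : H b) (x' : H b'), b = b' → emb b x = emb b' x' → (x : G) = x' := by
    rintro b _ x x' rfl h
    rw [(emb b).injective h]
  refine ⟨fun i => χ ⁻¹' {i}, fun i => ?_, fun a _ => mem_iUnion.2 ⟨χ a, rfl⟩⟩
  refine LinIndepSet.of_filtration hmono hpure (ν := ν) (fun a ha a' ha' h => ?_)
    (fun a _ => hν a) fun a _ b hb ha => wellFounded_lt.not_lt_min {b | a ∈ H b} ha hb
  exact hemb _ _ _ _ h (ha.trans ha'.symm)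

theorem mk_Iic_le_of_ord_succ {κ : Cardinal.{u}} (hκ : ℵ₀ ≤ κ) (b : (Order.succ κ).ord.ToType) :
    #(Iic b) ≤ κ := by
  rw [← Iio_insert]
  calc #(insert b (Iio b) : Set _) ≤ #(Iio b) + 1 := mk_insert_le
    _ ≤ κ + κ :=
      add_le_add (Order.lt_succ_iff.1 (by simpa using mk_Iio_lt b)) (one_le_aleph0.trans hκ)
    _ = κ := add_eq_self hκ

theorem indepCovered_univ_of_closure {ι : Type u} (hι : ℵ₀ ≤ #ι) (hG : #G ≤ Order.succ #ι)
    (cl : Set G → AddSubgroup G) (hmono : Monotone cl) (hsub : ∀ S, S ⊆ (cl S : Set G))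
    (hpure : ∀ S (a : G) (n : ℤ), n • a ∈ cl S → n • a ≠ 0 → a ∈ cl S)
    (hcard : ∀ S : Set G, #S ≤ #ι → #(cl S) ≤ #ι) : IndepCovered ι (univ : Set G) := by
  obtain ⟨f⟩ : Nonempty (G ↪ (Order.succ #ι).ord.ToType) := by
    rwa [← le_def, mk_toType, card_ord]
  refine indepCovered_univ_of_filtration (H := fun b => cl (f ⁻¹' Iic b))
    (fun b b' h => hmono (preimage_mono (Iic_subset_Iic.2 h))) (fun b => hpure _)
    (fun a => ⟨f a, hsub _ (show f a ≤ f a from le_rfl)⟩) fun b => Classical.choice ?_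
  exact (le_def _ _).1 <|
    hcard _ ((mk_preimage_of_injective _ _ f.injective).trans (mk_Iic_le_of_ord_succ hι b))

theorem mem_of_zsmul_mem_of_forall_nsmul_eq_zero {p : ℕ} (hp : p.Prime)
    (hG : ∀ x : G, p • x = 0) {H : AddSubgroup G} {a : G} {n : ℤ} (h : n • a ∈ H)
    (hna : n • a ≠ 0) : a ∈ H := by
  have hpa : (p : ℤ) • a = 0 := by rw [natCast_zsmul]; exact hG a
  have hndvd : ¬ (p : ℤ) ∣ n := by
    rintro ⟨k, rfl⟩
    exact hna (by rw [mul_comm, mul_smul, hpa, smul_zero])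
  obtain ⟨u, v, huv⟩ := ((Nat.prime_iff_prime_int.mp hp).coprime_iff_not_dvd.2 hndvd).symm
  have ha : a = u • (n • a) :=
    calc a = (u * n + v * p) • a := by rw [huv, one_smul]
      _ = u • (n • a) := by rw [add_smul, mul_smul, mul_smul, hpa, smul_zero, add_zero]
  rw [ha]
  exact zsmul_mem h u

theorem indepCovered_univ_of_prime {ι : Type u} (hι : ℵ₀ ≤ #ι) (hG : #G ≤ Order.succ #ι)
    {p : ℕ} (hp : p.Prime) (hpG : ∀ x : G, p • x = 0) : IndepCovered ι (univ : Set G) :=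
  indepCovered_univ_of_closure hι hG AddSubgroup.closure (fun _ _ h => AddSubgroup.closure_mono h)
    (fun _ => AddSubgroup.subset_closure)
    (fun _ _ _ => mem_of_zsmul_mem_of_forall_nsmul_eq_zero hp hpG)
    fun S hS => (mk_addSubgroupClosure_le S).trans (max_le hS hι)

def isolator (H : AddSubgroup G) : AddSubgroup G :=
  (AddCommGroup.torsion (G ⧸ H)).comap (QuotientAddGroup.mk' H)

theorem mem_isolator {H : AddSubgroup G} {x : G} :
    x ∈ isolator H ↔ ∃ n : ℕ, 0 < n ∧ n • x ∈ H := by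
  simp [isolator, AddCommGroup.mem_torsion, isOfFinAddOrder_iff_nsmul_eq_zero,
    ← QuotientAddGroup.mk_nsmul]

theorem le_isolator (H : AddSubgroup G) : H ≤ isolator H :=
  fun x hx => mem_isolator.2 ⟨1, one_pos, by rwa [one_smul]⟩

theorem isolator_mono : Monotone (isolator (G := G)) := fun _ _ hHK _ hx =>
  let ⟨n, hn, hnx⟩ := mem_isolator.1 hx
  mem_isolator.2 ⟨n, hn, hHK hnx⟩

theorem mem_isolator_of_zsmul_mem {H : AddSubgroup G} {a : G} {n : ℤ} (h : n • a ∈ isolator H)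
    (hn : n ≠ 0) : a ∈ isolator H := by
  obtain ⟨k, hk, hka⟩ := mem_isolator.1 h
  refine mem_isolator.2 ⟨k * n.natAbs, Nat.mul_pos hk (Int.natAbs_pos.2 hn), ?_⟩
  rw [mul_smul]
  rcases Int.natAbs_eq n with hn' | hn'
  · rwa [hn', natCast_zsmul] at hka
  · rwa [hn', neg_smul, smul_neg, neg_mem_iff, natCast_zsmul] at hka

theorem mk_isolator_le {κ : Cardinal.{u}} (hκ : ℵ₀ ≤ κ) {H : AddSubgroup G} (hH : #H ≤ κ)
    (hT : #{x : G | ∃ n : ℕ, 0 < n ∧ n • x = 0} ≤ κ) : #(isolator H) ≤ κ := by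
  have hsub : (isolator H : Set G) ⊆ ⋃ n : ℕ, nsmulAddMonoidHom (n + 1) ⁻¹' H := by
    intro x hx
    obtain ⟨n, hn, hnx⟩ := mem_isolator.1 hx
    exact mem_iUnion.2 ⟨n - 1, by simpa [Nat.sub_add_cancel hn] using hnx⟩
  refine (mk_le_mk_of_subset hsub).trans (mk_iUnion_nat_le hκ fun n => ?_)
  calc #(nsmulAddMonoidHom (n + 1) ⁻¹' (H : Set G))
      ≤ #H * #(nsmulAddMonoidHom (α := G) (n + 1)).ker := mk_preimage_le_mul_mk_ker _ _
    _ ≤ κ * κ := mul_le_mul' hH <| (mk_le_mk_of_subset (t := {x : G | ∃ n : ℕ, 0 < n ∧ n • x = 0})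
          fun x hx => ⟨n + 1, n.succ_pos, hx⟩).trans hT
    _ = κ := mul_eq_self hκ

theorem indepCovered_univ_of_mk_torsion_le {ι : Type u} (hι : ℵ₀ ≤ #ι) (hG : #G ≤ Order.succ #ι)
    (hT : #{x : G | ∃ n : ℕ, 0 < n ∧ n • x = 0} ≤ #ι) : IndepCovered ι (univ : Set G) :=
  indepCovered_univ_of_closure hι hG (fun S => isolator (AddSubgroup.closure S))
    (isolator_mono.comp fun _ _ h => AddSubgroup.closure_mono h)
    (fun S => AddSubgroup.subset_closure.trans (le_isolator _))
    (fun _ _ _ h hna => mem_isolator_of_zsmul_mem h fun hn => hna (by rw [hn, zero_smul]))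
    fun S hS => mk_isolator_le hι ((mk_addSubgroupClosure_le S).trans (max_le hS hι)) hT

end

open Cardinal in
theorem stmt14 {G : Type u} [AddCommGroup G] (κ : Cardinal.{u}) (hκ : ℵ₀ ≤ κ) :
    (∃ c : κ.out → Set G, (∀ i, LinIndepSet (c i)) ∧
        {x : G | x ≠ 0} ⊆ ⋃ i, c i) ↔
      (#G ≤ Order.succ κ ∧
        (#{x : G | ∃ n : ℕ, 0 < n ∧ n • x = 0} ≤ κ ∨
          ∃ p : ℕ, p.Prime ∧ ∀ x : G, p • x = 0)) := by
  have hι := mk_out κ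
  generalize κ.out = ι at hι ⊢
  subst hι
  constructor
  · intro h
    refine ⟨IndepCovered.mk_le_succ hκ h, (le_or_gt _ _).imp_right fun hT => ?_⟩
    obtain ⟨p, hp, hbig⟩ := exists_prime_lt_mk_setOf_nsmul_eq_zero hκ hT
    exact ⟨p, hp, IndepCovered.nsmul_eq_zero_of_lt_mk h hbig⟩
  · rintro ⟨hG, hT | ⟨p, hp, hpG⟩⟩
    · exact (indepCovered_univ_of_mk_torsion_le hκ hG hT).mono (subset_univ _)
    · exact (indepCovered_univ_of_prime hκ hG hp hpG).mono (subset_univ _)
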